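/- arXiv:1506.00397 — 2 statements merged into one kernel-verified Lean document; each statement's English description precedes it below -/
import Mathlib

section
/- Let $D\subset\mathbb{R}^2$ be bounded and open, $\varepsilon>0$, and let $v\in C^2(D)\cap C(\overline{D})$ satisfy $v>-1$ on $\overline{D}$. Let $\psi$ be twice continuously differentiable on $\Omega(v)$ and continuous on $\overline{\Omega(v)}$, and set $\phi(x,y,\eta):=\psi\big(x,y,(1+v(x,y))\eta-1\big)$ for $(x,y,\eta)\in\overline{\Omega}$. Then $\psi$ satisfies $\varepsilon^2\partial_x^2\psi+\varepsilon^2\partial_y^2\psi+\partial_z^2\psi=0$ in $\Omega(v)$ together with $\psi(x,y,z)=\tfrac{1+z}{1+v(x,y)}$ for $(x,y,z)\in\partial\Omega(v)$ if and only if $\phi$ satisfies $\mathcal{L}_v\phi=0$ in $\Omega$ together with $\phi(x,y,\eta)=\eta$ for $(x,y,\eta)\in\partial\Omega$. -/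
open Set MeasureTheory

/-- Partial derivative in the first variable of a function on `ℝ × ℝ × ℝ`. -/
noncomputable def dX (f : ℝ × ℝ × ℝ → ℝ) (z : ℝ × ℝ × ℝ) : ℝ :=
  deriv (fun t => f (t, z.2.1, z.2.2)) z.1

/-- Partial derivative in the second variable of a function on `ℝ × ℝ × ℝ`. -/
noncomputable def dY (f : ℝ × ℝ × ℝ → ℝ) (z : ℝ × ℝ × ℝ) : ℝ :=
  deriv (fun t => f (z.1, t, z.2.2)) z.2.1

/-- Partial derivative in the third (vertical) variable of a function on `ℝ × ℝ × ℝ`. -/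
noncomputable def dZ (f : ℝ × ℝ × ℝ → ℝ) (z : ℝ × ℝ × ℝ) : ℝ :=
  deriv (fun t => f (z.1, z.2.1, t)) z.2.2

/-- Partial derivative in the first variable of a function on `ℝ × ℝ`. -/
noncomputable def d1 (v : ℝ × ℝ → ℝ) (q : ℝ × ℝ) : ℝ := deriv (fun t => v (t, q.2)) q.1

/-- Partial derivative in the second variable of a function on `ℝ × ℝ`. -/
noncomputable def d2 (v : ℝ × ℝ → ℝ) (q : ℝ × ℝ) : ℝ := deriv (fun t => v (q.1, t)) q.2

/-- `|∇v|²` for a function on `ℝ × ℝ`. -/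
noncomputable def gradSq (v : ℝ × ℝ → ℝ) (q : ℝ × ℝ) : ℝ := d1 v q ^ 2 + d2 v q ^ 2

/-- The Laplacian `Δv` of a function on `ℝ × ℝ`. -/
noncomputable def lap (v : ℝ × ℝ → ℝ) (q : ℝ × ℝ) : ℝ := d1 (d1 v) q + d2 (d2 v) q

/-- The transformed elliptic operator `𝓛_v` acting on functions on `Ω = D × (0,1)`. -/
noncomputable def Lop (ε : ℝ) (v : ℝ × ℝ → ℝ) (w : ℝ × ℝ × ℝ → ℝ) (z : ℝ × ℝ × ℝ) : ℝ :=
  ε ^ 2 * dX (dX w) z + ε ^ 2 * dY (dY w) z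
    - 2 * ε ^ 2 * z.2.2 * (d1 v (z.1, z.2.1) / (1 + v (z.1, z.2.1))) * dX (dZ w) z
    - 2 * ε ^ 2 * z.2.2 * (d2 v (z.1, z.2.1) / (1 + v (z.1, z.2.1))) * dY (dZ w) z
    + ((1 + ε ^ 2 * z.2.2 ^ 2 * gradSq v (z.1, z.2.1)) / (1 + v (z.1, z.2.1)) ^ 2)
        * dZ (dZ w) z
    + ε ^ 2 * z.2.2 * (2 * gradSq v (z.1, z.2.1) / (1 + v (z.1, z.2.1)) ^ 2
        - lap v (z.1, z.2.1) / (1 + v (z.1, z.2.1))) * dZ w z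

/-- The open region `Ω(v)` between the ground plate at `z = -1` and the deflected plate. -/
def OmegaV (D : Set (ℝ × ℝ)) (v : ℝ × ℝ → ℝ) : Set (ℝ × ℝ × ℝ) :=
  {z : ℝ × ℝ × ℝ | (z.1, z.2.1) ∈ D ∧ -1 < z.2.2 ∧ z.2.2 < v (z.1, z.2.1)}

/-- The cylinder `Ω = D × (0,1)`. -/
def cyl (D : Set (ℝ × ℝ)) : Set (ℝ × ℝ × ℝ) :=
  {z : ℝ × ℝ × ℝ | (z.1, z.2.1) ∈ D ∧ z.2.2 ∈ Ioo (0 : ℝ) 1}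


open Filter Topology

section slices
variable {F : Type*} [NormedAddCommGroup F] [NormedSpace ℝ F]

lemma hasDerivAt_slice1 {G : ℝ × ℝ × ℝ → F} {M : ℝ × ℝ × ℝ →L[ℝ] F} {p : ℝ × ℝ × ℝ}
    (h : HasFDerivAt G M p) :
    HasDerivAt (fun t => G (t, p.2.1, p.2.2)) (M (1, 0, 0)) p.1 := by
  have hc : HasDerivAt (fun t : ℝ => ((t, p.2.1, p.2.2) : ℝ × ℝ × ℝ)) (1, 0, 0) p.1 :=
    (hasDerivAt_id p.1).prodMk ((hasDerivAt_const p.1 p.2.1).prodMk (hasDerivAt_const p.1 p.2.2))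
  have : p = (p.1, p.2.1, p.2.2) := rfl
  exact (this ▸ h).comp_hasDerivAt p.1 hc

lemma hasDerivAt_slice2 {G : ℝ × ℝ × ℝ → F} {M : ℝ × ℝ × ℝ →L[ℝ] F} {p : ℝ × ℝ × ℝ}
    (h : HasFDerivAt G M p) :
    HasDerivAt (fun t => G (p.1, t, p.2.2)) (M (0, 1, 0)) p.2.1 := by
  have hc : HasDerivAt (fun t : ℝ => ((p.1, t, p.2.2) : ℝ × ℝ × ℝ)) (0, 1, 0) p.2.1 :=
    (hasDerivAt_const p.2.1 p.1).prodMk ((hasDerivAt_id p.2.1).prodMk (hasDerivAt_const p.2.1 p.2.2))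
  have : p = (p.1, p.2.1, p.2.2) := rfl
  exact (this ▸ h).comp_hasDerivAt p.2.1 hc

lemma hasDerivAt_slice3 {G : ℝ × ℝ × ℝ → F} {M : ℝ × ℝ × ℝ →L[ℝ] F} {p : ℝ × ℝ × ℝ}
    (h : HasFDerivAt G M p) :
    HasDerivAt (fun t => G (p.1, p.2.1, t)) (M (0, 0, 1)) p.2.2 := by
  have hc : HasDerivAt (fun t : ℝ => ((p.1, p.2.1, t) : ℝ × ℝ × ℝ)) (0, 0, 1) p.2.2 :=
    (hasDerivAt_const p.2.2 p.1).prodMk ((hasDerivAt_const p.2.2 p.2.1).prodMk (hasDerivAt_id p.2.2))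
  have : p = (p.1, p.2.1, p.2.2) := rfl
  exact (this ▸ h).comp_hasDerivAt p.2.2 hc

lemma hasDerivAt_pslice1 {G : ℝ × ℝ → F} {M : ℝ × ℝ →L[ℝ] F} {q : ℝ × ℝ}
    (h : HasFDerivAt G M q) :
    HasDerivAt (fun t => G (t, q.2)) (M (1, 0)) q.1 := by
  have hc : HasDerivAt (fun t : ℝ => ((t, q.2) : ℝ × ℝ)) (1, 0) q.1 :=
    (hasDerivAt_id q.1).prodMk (hasDerivAt_const q.1 q.2)
  have : q = (q.1, q.2) := rfl
  exact (this ▸ h).comp_hasDerivAt q.1 hc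

lemma hasDerivAt_pslice2 {G : ℝ × ℝ → F} {M : ℝ × ℝ →L[ℝ] F} {q : ℝ × ℝ}
    (h : HasFDerivAt G M q) :
    HasDerivAt (fun t => G (q.1, t)) (M (0, 1)) q.2 := by
  have hc : HasDerivAt (fun t : ℝ => ((q.1, t) : ℝ × ℝ)) (0, 1) q.2 :=
    (hasDerivAt_const q.2 q.1).prodMk (hasDerivAt_id q.2)
  have : q = (q.1, q.2) := rfl
  exact (this ▸ h).comp_hasDerivAt q.2 hc

end slices

lemma dX_of_hasFDerivAt {f : ℝ × ℝ × ℝ → ℝ} {L : ℝ × ℝ × ℝ →L[ℝ] ℝ} {p : ℝ × ℝ × ℝ}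
    (h : HasFDerivAt f L p) : dX f p = L (1, 0, 0) := (hasDerivAt_slice1 h).deriv
lemma dY_of_hasFDerivAt {f : ℝ × ℝ × ℝ → ℝ} {L : ℝ × ℝ × ℝ →L[ℝ] ℝ} {p : ℝ × ℝ × ℝ}
    (h : HasFDerivAt f L p) : dY f p = L (0, 1, 0) := (hasDerivAt_slice2 h).deriv
lemma dZ_of_hasFDerivAt {f : ℝ × ℝ × ℝ → ℝ} {L : ℝ × ℝ × ℝ →L[ℝ] ℝ} {p : ℝ × ℝ × ℝ}
    (h : HasFDerivAt f L p) : dZ f p = L (0, 0, 1) := (hasDerivAt_slice3 h).deriv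
lemma d1_of_hasFDerivAt {v : ℝ × ℝ → ℝ} {L : ℝ × ℝ →L[ℝ] ℝ} {q : ℝ × ℝ}
    (h : HasFDerivAt v L q) : d1 v q = L (1, 0) := (hasDerivAt_pslice1 h).deriv
lemma d2_of_hasFDerivAt {v : ℝ × ℝ → ℝ} {L : ℝ × ℝ →L[ℝ] ℝ} {q : ℝ × ℝ}
    (h : HasFDerivAt v L q) : d2 v q = L (0, 1) := (hasDerivAt_pslice2 h).deriv

section second
variable {f : ℝ × ℝ × ℝ → ℝ} {U : Set (ℝ × ℝ × ℝ)} {p : ℝ × ℝ × ℝ}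

/-- differentiability at every point of an open set on which `f` is `C²`. -/
lemma diffAt_of_C2 (hU : IsOpen U) (hf : ContDiffOn ℝ 2 f U) {z} (hz : z ∈ U) :
    DifferentiableAt ℝ f z :=
  (hf.contDiffAt (hU.mem_nhds hz)).differentiableAt two_ne_zero

lemma hasFDerivAt_fderiv_of_C2 (hU : IsOpen U) (hf : ContDiffOn ℝ 2 f U) (hp : p ∈ U) :
    HasFDerivAt (fderiv ℝ f) (fderiv ℝ (fderiv ℝ f) p) p := by
  have h1 : ContDiffOn ℝ 1 (fderiv ℝ f) U := hf.fderiv_of_isOpen hU (by norm_num)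
  exact ((h1.contDiffAt (hU.mem_nhds hp)).differentiableAt one_ne_zero).hasFDerivAt

lemma symm_snd_of_C2 (hU : IsOpen U) (hf : ContDiffOn ℝ 2 f U) (hp : p ∈ U) (a b : ℝ × ℝ × ℝ) :
    fderiv ℝ (fderiv ℝ f) p a b = fderiv ℝ (fderiv ℝ f) p b a := by
  apply second_derivative_symmetric_of_eventually_of_real
  · filter_upwards [hU.mem_nhds hp] with z hz using (diffAt_of_C2 hU hf hz).hasFDerivAt
  · exact hasFDerivAt_fderiv_of_C2 hU hf hp

lemma ev_dX (hU : IsOpen U) (hf : ContDiffOn ℝ 2 f U) (hp : p ∈ U) :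
    ∀ᶠ z in 𝓝 p, dX f z = fderiv ℝ f z (1, 0, 0) := by
  filter_upwards [hU.mem_nhds hp] with z hz using
    dX_of_hasFDerivAt (diffAt_of_C2 hU hf hz).hasFDerivAt
lemma ev_dY (hU : IsOpen U) (hf : ContDiffOn ℝ 2 f U) (hp : p ∈ U) :
    ∀ᶠ z in 𝓝 p, dY f z = fderiv ℝ f z (0, 1, 0) := by
  filter_upwards [hU.mem_nhds hp] with z hz using
    dY_of_hasFDerivAt (diffAt_of_C2 hU hf hz).hasFDerivAt
lemma ev_dZ (hU : IsOpen U) (hf : ContDiffOn ℝ 2 f U) (hp : p ∈ U) :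
    ∀ᶠ z in 𝓝 p, dZ f z = fderiv ℝ f z (0, 0, 1) := by
  filter_upwards [hU.mem_nhds hp] with z hz using
    dZ_of_hasFDerivAt (diffAt_of_C2 hU hf hz).hasFDerivAt

lemma tendsto_slice1 (p : ℝ × ℝ × ℝ) :
    Tendsto (fun t : ℝ => ((t, p.2.1, p.2.2) : ℝ × ℝ × ℝ)) (𝓝 p.1) (𝓝 p) :=
  (continuous_id.prodMk (continuous_const.prodMk continuous_const)).tendsto' p.1 p rfl
lemma tendsto_slice2 (p : ℝ × ℝ × ℝ) :
    Tendsto (fun t : ℝ => ((p.1, t, p.2.2) : ℝ × ℝ × ℝ)) (𝓝 p.2.1) (𝓝 p) :=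
  (continuous_const.prodMk (continuous_id.prodMk continuous_const)).tendsto' p.2.1 p rfl
lemma tendsto_slice3 (p : ℝ × ℝ × ℝ) :
    Tendsto (fun t : ℝ => ((p.1, p.2.1, t) : ℝ × ℝ × ℝ)) (𝓝 p.2.2) (𝓝 p) :=
  (continuous_const.prodMk (continuous_const.prodMk continuous_id)).tendsto' p.2.2 p rfl

lemma dXdX_of_C2 (hU : IsOpen U) (hf : ContDiffOn ℝ 2 f U) (hp : p ∈ U) :
    dX (dX f) p = fderiv ℝ (fderiv ℝ f) p (1, 0, 0) (1, 0, 0) := by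
  have hev : ∀ᶠ t in 𝓝 p.1, dX f (t, p.2.1, p.2.2) = fderiv ℝ f (t, p.2.1, p.2.2) (1, 0, 0) :=
    (tendsto_slice1 p).eventually (ev_dX hU hf hp)
  have h1 : HasDerivAt (fun t => fderiv ℝ f (t, p.2.1, p.2.2) (1, 0, 0))
      (fderiv ℝ (fderiv ℝ f) p (1, 0, 0) (1, 0, 0)) p.1 := by
    simpa using (hasDerivAt_slice1 (hasFDerivAt_fderiv_of_C2 hU hf hp)).clm_apply
      (hasDerivAt_const _ _)
  have : dX (dX f) p = deriv (fun t => dX f (t, p.2.1, p.2.2)) p.1 := rfl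
  rw [this, Filter.EventuallyEq.deriv_eq hev]
  exact h1.deriv

lemma dYdY_of_C2 (hU : IsOpen U) (hf : ContDiffOn ℝ 2 f U) (hp : p ∈ U) :
    dY (dY f) p = fderiv ℝ (fderiv ℝ f) p (0, 1, 0) (0, 1, 0) := by
  have hev : ∀ᶠ t in 𝓝 p.2.1, dY f (p.1, t, p.2.2) = fderiv ℝ f (p.1, t, p.2.2) (0, 1, 0) :=
    (tendsto_slice2 p).eventually (ev_dY hU hf hp)
  have h1 : HasDerivAt (fun t => fderiv ℝ f (p.1, t, p.2.2) (0, 1, 0))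
      (fderiv ℝ (fderiv ℝ f) p (0, 1, 0) (0, 1, 0)) p.2.1 := by
    simpa using (hasDerivAt_slice2 (hasFDerivAt_fderiv_of_C2 hU hf hp)).clm_apply
      (hasDerivAt_const _ _)
  have : dY (dY f) p = deriv (fun t => dY f (p.1, t, p.2.2)) p.2.1 := rfl
  rw [this, Filter.EventuallyEq.deriv_eq hev]
  exact h1.deriv

lemma dZdZ_of_C2 (hU : IsOpen U) (hf : ContDiffOn ℝ 2 f U) (hp : p ∈ U) :
    dZ (dZ f) p = fderiv ℝ (fderiv ℝ f) p (0, 0, 1) (0, 0, 1) := by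
  have hev : ∀ᶠ t in 𝓝 p.2.2, dZ f (p.1, p.2.1, t) = fderiv ℝ f (p.1, p.2.1, t) (0, 0, 1) :=
    (tendsto_slice3 p).eventually (ev_dZ hU hf hp)
  have h1 : HasDerivAt (fun t => fderiv ℝ f (p.1, p.2.1, t) (0, 0, 1))
      (fderiv ℝ (fderiv ℝ f) p (0, 0, 1) (0, 0, 1)) p.2.2 := by
    simpa using (hasDerivAt_slice3 (hasFDerivAt_fderiv_of_C2 hU hf hp)).clm_apply
      (hasDerivAt_const _ _)
  have : dZ (dZ f) p = deriv (fun t => dZ f (p.1, p.2.1, t)) p.2.2 := rfl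
  rw [this, Filter.EventuallyEq.deriv_eq hev]
  exact h1.deriv

end second

section second2
variable {v : ℝ × ℝ → ℝ} {V : Set (ℝ × ℝ)} {q : ℝ × ℝ}

lemma pdiffAt_of_C2 (hV : IsOpen V) (hv : ContDiffOn ℝ 2 v V) {z} (hz : z ∈ V) :
    DifferentiableAt ℝ v z :=
  (hv.contDiffAt (hV.mem_nhds hz)).differentiableAt two_ne_zero

lemma hasFDerivAt_fderiv_of_pC2 (hV : IsOpen V) (hv : ContDiffOn ℝ 2 v V) (hq : q ∈ V) :
    HasFDerivAt (fderiv ℝ v) (fderiv ℝ (fderiv ℝ v) q) q := by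
  have h1 : ContDiffOn ℝ 1 (fderiv ℝ v) V := hv.fderiv_of_isOpen hV (by norm_num)
  exact ((h1.contDiffAt (hV.mem_nhds hq)).differentiableAt one_ne_zero).hasFDerivAt

lemma tendsto_pslice1 (q : ℝ × ℝ) :
    Tendsto (fun t : ℝ => ((t, q.2) : ℝ × ℝ)) (𝓝 q.1) (𝓝 q) :=
  (continuous_id.prodMk continuous_const).tendsto' q.1 q rfl
lemma tendsto_pslice2 (q : ℝ × ℝ) :
    Tendsto (fun t : ℝ => ((q.1, t) : ℝ × ℝ)) (𝓝 q.2) (𝓝 q) :=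
  (continuous_const.prodMk continuous_id).tendsto' q.2 q rfl

lemma d1d1_of_C2 (hV : IsOpen V) (hv : ContDiffOn ℝ 2 v V) (hq : q ∈ V) :
    d1 (d1 v) q = fderiv ℝ (fderiv ℝ v) q (1, 0) (1, 0) := by
  have hev : ∀ᶠ t in 𝓝 q.1, d1 v (t, q.2) = fderiv ℝ v (t, q.2) (1, 0) := by
    have base : ∀ᶠ z in 𝓝 q, d1 v z = fderiv ℝ v z (1, 0) := by
      filter_upwards [hV.mem_nhds hq] with z hz using
        d1_of_hasFDerivAt (pdiffAt_of_C2 hV hv hz).hasFDerivAt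
    exact (tendsto_pslice1 q).eventually base
  have h1 : HasDerivAt (fun t => fderiv ℝ v (t, q.2) (1, 0))
      (fderiv ℝ (fderiv ℝ v) q (1, 0) (1, 0)) q.1 := by
    simpa using (hasDerivAt_pslice1 (hasFDerivAt_fderiv_of_pC2 hV hv hq)).clm_apply
      (hasDerivAt_const _ _)
  have : d1 (d1 v) q = deriv (fun t => d1 v (t, q.2)) q.1 := rfl
  rw [this, Filter.EventuallyEq.deriv_eq hev]
  exact h1.deriv

lemma d2d2_of_C2 (hV : IsOpen V) (hv : ContDiffOn ℝ 2 v V) (hq : q ∈ V) :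
    d2 (d2 v) q = fderiv ℝ (fderiv ℝ v) q (0, 1) (0, 1) := by
  have hev : ∀ᶠ t in 𝓝 q.2, d2 v (q.1, t) = fderiv ℝ v (q.1, t) (0, 1) := by
    have base : ∀ᶠ z in 𝓝 q, d2 v z = fderiv ℝ v z (0, 1) := by
      filter_upwards [hV.mem_nhds hq] with z hz using
        d2_of_hasFDerivAt (pdiffAt_of_C2 hV hv hz).hasFDerivAt
    exact (tendsto_pslice2 q).eventually base
  have h1 : HasDerivAt (fun t => fderiv ℝ v (q.1, t) (0, 1))
      (fderiv ℝ (fderiv ℝ v) q (0, 1) (0, 1)) q.2 := by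
    simpa using (hasDerivAt_pslice2 (hasFDerivAt_fderiv_of_pC2 hV hv hq)).clm_apply
      (hasDerivAt_const _ _)
  have : d2 (d2 v) q = deriv (fun t => d2 v (q.1, t)) q.2 := rfl
  rw [this, Filter.EventuallyEq.deriv_eq hev]
  exact h1.deriv

end second2

def Tmap (v : ℝ × ℝ → ℝ) (p : ℝ × ℝ × ℝ) : ℝ × ℝ × ℝ :=
  (p.1, p.2.1, (1 + v (p.1, p.2.1)) * p.2.2 - 1)

section phi
variable {D : Set (ℝ × ℝ)} {v : ℝ × ℝ → ℝ} {ψ φ : ℝ × ℝ × ℝ → ℝ}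

lemma Tmap_mem_omega (hv1d : ∀ q ∈ D, 0 < 1 + v q) {p} (hp : p ∈ cyl D) :
    Tmap v p ∈ OmegaV D v := by
  obtain ⟨hq, h0, h1⟩ := hp
  have h := hv1d _ hq
  refine ⟨hq, ?_, ?_⟩ <;> · simp only [Tmap]; nlinarith

lemma dX_phi (hD : IsOpen D) (hv2 : ContDiffOn ℝ 2 v D)
    (hΩo : IsOpen (OmegaV D v)) (hψ : ContDiffOn ℝ 2 ψ (OmegaV D v))
    (hv1d : ∀ q ∈ D, 0 < 1 + v q)
    (hφ : ∀ z : ℝ × ℝ × ℝ, φ z = ψ (z.1, z.2.1, (1 + v (z.1, z.2.1)) * z.2.2 - 1))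
    {p' : ℝ × ℝ × ℝ} (hp' : p' ∈ cyl D) :
    dX φ p' = fderiv ℝ ψ (Tmap v p') (1, 0, 0)
      + (p'.2.2 * fderiv ℝ v (p'.1, p'.2.1) (1, 0)) * fderiv ℝ ψ (Tmap v p') (0, 0, 1) := by
  have hq : (p'.1, p'.2.1) ∈ D := hp'.1
  have hψd : HasFDerivAt ψ (fderiv ℝ ψ (Tmap v p')) (Tmap v p') :=
    (diffAt_of_C2 hΩo hψ (Tmap_mem_omega hv1d hp')).hasFDerivAt
  have hvd : HasFDerivAt v (fderiv ℝ v (p'.1, p'.2.1)) (p'.1, p'.2.1) :=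
    (pdiffAt_of_C2 hD hv2 hq).hasFDerivAt
  have h3 : HasDerivAt (fun t => v (t, p'.2.1)) (fderiv ℝ v (p'.1, p'.2.1) (1, 0)) p'.1 :=
    hasDerivAt_pslice1 hvd
  have hcurve : HasDerivAt (fun t => Tmap v (t, p'.2.1, p'.2.2))
      (1, 0, fderiv ℝ v (p'.1, p'.2.1) (1, 0) * p'.2.2) p'.1 := by
    refine (hasDerivAt_id p'.1).prodMk ((hasDerivAt_const _ _).prodMk ?_)
    simpa using ((h3.const_add 1).mul_const p'.2.2).sub_const 1
  have hcomp : HasDerivAt (fun t => ψ (Tmap v (t, p'.2.1, p'.2.2)))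
      (fderiv ℝ ψ (Tmap v p') (1, 0, fderiv ℝ v (p'.1, p'.2.1) (1, 0) * p'.2.2)) p'.1 :=
    hψd.comp_hasDerivAt p'.1 hcurve
  have hfun : (fun t => φ (t, p'.2.1, p'.2.2)) = fun t => ψ (Tmap v (t, p'.2.1, p'.2.2)) := by
    funext t; exact hφ _
  have hder : dX φ p' = fderiv ℝ ψ (Tmap v p')
      (1, 0, fderiv ℝ v (p'.1, p'.2.1) (1, 0) * p'.2.2) := by
    show deriv (fun t => φ (t, p'.2.1, p'.2.2)) p'.1 = _
    rw [hfun]; exact hcomp.deriv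
  rw [hder]
  have hvec : ((1, 0, fderiv ℝ v (p'.1, p'.2.1) (1, 0) * p'.2.2) : ℝ × ℝ × ℝ)
      = (1, 0, 0) + (p'.2.2 * fderiv ℝ v (p'.1, p'.2.1) (1, 0)) • (0, 0, 1) := by
    simp [Prod.ext_iff]; ring
  rw [hvec, map_add, _root_.map_smul, smul_eq_mul]

lemma dY_phi (hD : IsOpen D) (hv2 : ContDiffOn ℝ 2 v D)
    (hΩo : IsOpen (OmegaV D v)) (hψ : ContDiffOn ℝ 2 ψ (OmegaV D v))
    (hv1d : ∀ q ∈ D, 0 < 1 + v q)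
    (hφ : ∀ z : ℝ × ℝ × ℝ, φ z = ψ (z.1, z.2.1, (1 + v (z.1, z.2.1)) * z.2.2 - 1))
    {p' : ℝ × ℝ × ℝ} (hp' : p' ∈ cyl D) :
    dY φ p' = fderiv ℝ ψ (Tmap v p') (0, 1, 0)
      + (p'.2.2 * fderiv ℝ v (p'.1, p'.2.1) (0, 1)) * fderiv ℝ ψ (Tmap v p') (0, 0, 1) := by
  have hq : (p'.1, p'.2.1) ∈ D := hp'.1
  have hψd : HasFDerivAt ψ (fderiv ℝ ψ (Tmap v p')) (Tmap v p') :=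
    (diffAt_of_C2 hΩo hψ (Tmap_mem_omega hv1d hp')).hasFDerivAt
  have hvd : HasFDerivAt v (fderiv ℝ v (p'.1, p'.2.1)) (p'.1, p'.2.1) :=
    (pdiffAt_of_C2 hD hv2 hq).hasFDerivAt
  have h3 : HasDerivAt (fun t => v (p'.1, t)) (fderiv ℝ v (p'.1, p'.2.1) (0, 1)) p'.2.1 :=
    hasDerivAt_pslice2 hvd
  have hcurve : HasDerivAt (fun t => Tmap v (p'.1, t, p'.2.2))
      (0, 1, fderiv ℝ v (p'.1, p'.2.1) (0, 1) * p'.2.2) p'.2.1 := by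
    refine (hasDerivAt_const _ _).prodMk ((hasDerivAt_id _).prodMk ?_)
    simpa using ((h3.const_add 1).mul_const p'.2.2).sub_const 1
  have hcomp : HasDerivAt (fun t => ψ (Tmap v (p'.1, t, p'.2.2)))
      (fderiv ℝ ψ (Tmap v p') (0, 1, fderiv ℝ v (p'.1, p'.2.1) (0, 1) * p'.2.2)) p'.2.1 :=
    hψd.comp_hasDerivAt p'.2.1 hcurve
  have hfun : (fun t => φ (p'.1, t, p'.2.2)) = fun t => ψ (Tmap v (p'.1, t, p'.2.2)) := by
    funext t; exact hφ _
  have hder : dY φ p' = fderiv ℝ ψ (Tmap v p')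
      (0, 1, fderiv ℝ v (p'.1, p'.2.1) (0, 1) * p'.2.2) := by
    show deriv (fun t => φ (p'.1, t, p'.2.2)) p'.2.1 = _
    rw [hfun]; exact hcomp.deriv
  rw [hder]
  have hvec : ((0, 1, fderiv ℝ v (p'.1, p'.2.1) (0, 1) * p'.2.2) : ℝ × ℝ × ℝ)
      = (0, 1, 0) + (p'.2.2 * fderiv ℝ v (p'.1, p'.2.1) (0, 1)) • (0, 0, 1) := by
    simp [Prod.ext_iff]; ring
  rw [hvec, map_add, _root_.map_smul, smul_eq_mul]

lemma dZ_phi (hΩo : IsOpen (OmegaV D v)) (hψ : ContDiffOn ℝ 2 ψ (OmegaV D v))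
    (hv1d : ∀ q ∈ D, 0 < 1 + v q)
    (hφ : ∀ z : ℝ × ℝ × ℝ, φ z = ψ (z.1, z.2.1, (1 + v (z.1, z.2.1)) * z.2.2 - 1))
    {p' : ℝ × ℝ × ℝ} (hp' : p' ∈ cyl D) :
    dZ φ p' = (1 + v (p'.1, p'.2.1)) * fderiv ℝ ψ (Tmap v p') (0, 0, 1) := by
  have hψd : HasFDerivAt ψ (fderiv ℝ ψ (Tmap v p')) (Tmap v p') :=
    (diffAt_of_C2 hΩo hψ (Tmap_mem_omega hv1d hp')).hasFDerivAt
  have hcurve : HasDerivAt (fun t => Tmap v (p'.1, p'.2.1, t))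
      (0, 0, 1 + v (p'.1, p'.2.1)) p'.2.2 := by
    refine (hasDerivAt_const _ _).prodMk ((hasDerivAt_const _ _).prodMk ?_)
    simpa using ((hasDerivAt_id p'.2.2).const_mul (1 + v (p'.1, p'.2.1))).sub_const 1
  have hcomp : HasDerivAt (fun t => ψ (Tmap v (p'.1, p'.2.1, t)))
      (fderiv ℝ ψ (Tmap v p') (0, 0, 1 + v (p'.1, p'.2.1))) p'.2.2 :=
    hψd.comp_hasDerivAt p'.2.2 hcurve
  have hfun : (fun t => φ (p'.1, p'.2.1, t)) = fun t => ψ (Tmap v (p'.1, p'.2.1, t)) := by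
    funext t; exact hφ _
  have hder : dZ φ p' = fderiv ℝ ψ (Tmap v p') (0, 0, 1 + v (p'.1, p'.2.1)) := by
    show deriv (fun t => φ (p'.1, p'.2.1, t)) p'.2.2 = _
    rw [hfun]; exact hcomp.deriv
  rw [hder]
  have hvec : ((0, 0, 1 + v (p'.1, p'.2.1)) : ℝ × ℝ × ℝ)
      = (1 + v (p'.1, p'.2.1)) • (0, 0, 1) := by
    simp [Prod.ext_iff]
  rw [hvec, _root_.map_smul, smul_eq_mul]

end phi


section clos
variable {D : Set (ℝ × ℝ)} {v : ℝ × ℝ → ℝ}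

lemma cyl_eq_preimage :
    cyl D = (Homeomorph.prodAssoc ℝ ℝ ℝ).symm ⁻¹' (D ×ˢ Ioo (0:ℝ) 1) := rfl


lemma closure_cyl (hD : IsOpen D) :
    closure (cyl D) = {p : ℝ × ℝ × ℝ | (p.1, p.2.1) ∈ closure D ∧ p.2.2 ∈ Icc (0:ℝ) 1} := by
  rw [cyl_eq_preimage, ← Homeomorph.preimage_closure, closure_prod_eq,
    closure_Ioo (by norm_num : (0:ℝ) ≠ 1)]
  rfl


lemma closure_omega (hD : IsOpen D) (hvc : ContinuousOn v (closure D))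
    (hv1 : ∀ q ∈ closure D, -1 < v q) :
    closure (OmegaV D v) =
      {w : ℝ × ℝ × ℝ | (w.1, w.2.1) ∈ closure D ∧ w.2.2 ∈ Icc (-1) (v (w.1, w.2.1))} := by
  apply Subset.antisymm
  · have hcl : IsClosed {w : ℝ × ℝ × ℝ |
        (w.1, w.2.1) ∈ closure D ∧ w.2.2 ∈ Icc (-1) (v (w.1, w.2.1))} := by
      apply IsSeqClosed.isClosed
      intro wn w hwn hlim
      have hq : Tendsto (fun n => ((wn n).1, (wn n).2.1)) atTop (𝓝 (w.1, w.2.1)) :=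
        ((continuous_fst.prodMk (continuous_fst.comp continuous_snd)).continuousAt).tendsto.comp hlim
      have hz : Tendsto (fun n => (wn n).2.2) atTop (𝓝 w.2.2) :=
        ((continuous_snd.comp continuous_snd).continuousAt).tendsto.comp hlim
      have hqD : (w.1, w.2.1) ∈ closure D :=
        isClosed_closure.mem_of_tendsto hq (Eventually.of_forall fun n => (hwn n).1)
      refine ⟨hqD, le_of_tendsto_of_tendsto tendsto_const_nhds hz
        (Eventually.of_forall fun n => (hwn n).2.1), ?_⟩
      have hqw : Tendsto (fun n => ((wn n).1, (wn n).2.1)) atTop (𝓝[closure D] (w.1, w.2.1)) := by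
        rw [tendsto_nhdsWithin_iff]
        exact ⟨hq, Eventually.of_forall fun n => (hwn n).1⟩
      have hv : Tendsto (fun n => v ((wn n).1, (wn n).2.1)) atTop (𝓝 (v (w.1, w.2.1))) :=
        ((hvc _ hqD).tendsto).comp hqw
      exact le_of_tendsto_of_tendsto hz hv (Eventually.of_forall fun n => (hwn n).2.2)
    refine closure_minimal ?_ hcl
    rintro w ⟨h1, h2, h3⟩
    exact ⟨subset_closure h1, le_of_lt h2, le_of_lt h3⟩
  · rintro w ⟨hq, hz1, hz2⟩
    set q := (w.1, w.2.1) with hqdef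
    have hvq : 0 < 1 + v q := by linarith [hv1 q hq]
    rw [mem_closure_iff_seq_limit]
    obtain ⟨u, hu, hulim⟩ := mem_closure_iff_seq_limit.1 hq
    have huc : Tendsto (fun n => v (u n)) atTop (𝓝 (v q)) := by
      refine ((hvc _ hq).tendsto).comp ?_
      rw [tendsto_nhdsWithin_iff]
      exact ⟨hulim, Eventually.of_forall fun n => subset_closure (hu n)⟩
    set t : ℝ := (w.2.2 + 1) / (v q + 1) with ht
    have ht0 : 0 ≤ t := div_nonneg (by linarith) (by linarith)
    have ht1 : t ≤ 1 := by
      rw [div_le_one (by linarith)]; linarith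
    set s : ℕ → ℝ := fun n => 1 / (n + 1 : ℝ) with hs
    have hs0 : ∀ n, 0 < s n := fun n => by positivity
    have hs1 : ∀ n, s n ≤ 1 := fun n => by
      rw [hs]; rw [div_le_one (by positivity)]; push_cast; linarith
    have hslim : Tendsto s atTop (𝓝 0) := tendsto_one_div_add_atTop_nhds_zero_nat
    set tn : ℕ → ℝ := fun n => (1 - s n) * t + s n * (1/2) with htn
    have htn0 : ∀ n, 0 < tn n := fun n => by
      have h1 := hs0 n; have h2 := hs1 n
      simp only [htn]
      nlinarith [mul_nonneg (by linarith : (0:ℝ) ≤ 1 - s n) ht0]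
    have htn1 : ∀ n, tn n < 1 := fun n => by
      have h1 := hs0 n; have h2 := hs1 n
      simp only [htn]
      nlinarith [mul_le_of_le_one_right (by linarith : (0:ℝ) ≤ 1 - s n) ht1]
    have htnlim : Tendsto tn atTop (𝓝 t) := by
      have : Tendsto tn atTop (𝓝 ((1 - 0) * t + 0 * (1/2))) := by
        exact (((tendsto_const_nhds.sub hslim).mul tendsto_const_nhds).add
          (hslim.mul tendsto_const_nhds))
      simpa using this
    refine ⟨fun n => ((u n).1, (u n).2, (1 + v (u n)) * tn n - 1), fun n => ?_, ?_⟩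
    · have hvun : 0 < 1 + v (u n) := by linarith [hv1 (u n) (subset_closure (hu n))]
      refine ⟨by simpa using hu n, ?_, ?_⟩
      · simp only
        nlinarith [htn0 n]
      · simp only
        nlinarith [htn1 n, htn0 n]
    · have hz : Tendsto (fun n => (1 + v (u n)) * tn n - 1) atTop (𝓝 ((1 + v q) * t - 1)) :=
        ((tendsto_const_nhds.add huc).mul htnlim).sub tendsto_const_nhds
      have hzt : (1 + v q) * t - 1 = w.2.2 := by
        rw [ht]
        have hne : v q + 1 ≠ 0 := by linarith
        field_simp
        ring
      rw [hzt] at hz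
      have h1 : Tendsto (fun n => (u n).1) atTop (𝓝 w.1) :=
        (continuous_fst.continuousAt).tendsto.comp hulim
      have h2 : Tendsto (fun n => (u n).2) atTop (𝓝 w.2.1) :=
        (continuous_snd.continuousAt).tendsto.comp hulim
      exact h1.prodMk_nhds (h2.prodMk_nhds hz)

end clos

section key
variable {D : Set (ℝ × ℝ)} {v ψ φ : _} {ε : ℝ}

lemma isOpen_omega (hD : IsOpen D) (hv : ContinuousOn v D) : IsOpen (OmegaV D v) := by
  rw [isOpen_iff_mem_nhds]
  rintro p ⟨hq, h1, h2⟩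
  have hg : ContinuousAt (fun w : ℝ × ℝ × ℝ => (w.1, w.2.1)) p :=
    (continuous_fst.prodMk (continuous_fst.comp continuous_snd)).continuousAt
  have hc : ContinuousAt (fun w : ℝ × ℝ × ℝ => v (w.1, w.2.1)) p :=
    ContinuousAt.comp (x := p) (f := fun w : ℝ × ℝ × ℝ => (w.1, w.2.1))
      (hv.continuousAt (hD.mem_nhds hq)) hg
  have e1 : ∀ᶠ w : ℝ × ℝ × ℝ in 𝓝 p, (w.1, w.2.1) ∈ D :=
    (continuous_fst.prodMk (continuous_fst.comp continuous_snd)).continuousAt.preimage_mem_nhds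
      (hD.mem_nhds hq)
  have e2 : ∀ᶠ w : ℝ × ℝ × ℝ in 𝓝 p, -1 < w.2.2 :=
    (continuous_snd.comp continuous_snd).continuousAt.eventually_const_lt h1
  have e3 : ∀ᶠ w : ℝ × ℝ × ℝ in 𝓝 p, w.2.2 < v (w.1, w.2.1) :=
    ContinuousAt.eventually_lt (continuous_snd.comp continuous_snd).continuousAt hc h2
  filter_upwards [e1, e2, e3] with w a b c using ⟨a, b, c⟩

lemma isOpen_cyl (hD : IsOpen D) : IsOpen (cyl D) :=
  (hD.prod isOpen_Ioo).preimage (Homeomorph.prodAssoc ℝ ℝ ℝ).symm.continuous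

lemma key_identity (hD : IsOpen D) (hv2 : ContDiffOn ℝ 2 v D)
    (hv1d : ∀ q ∈ D, 0 < 1 + v q) (hψ : ContDiffOn ℝ 2 ψ (OmegaV D v))
    (hφ : ∀ z : ℝ × ℝ × ℝ, φ z = ψ (z.1, z.2.1, (1 + v (z.1, z.2.1)) * z.2.2 - 1))
    {p : ℝ × ℝ × ℝ} (hp : p ∈ cyl D) :
    Lop ε v φ p = ε ^ 2 * dX (dX ψ) (Tmap v p) + ε ^ 2 * dY (dY ψ) (Tmap v p)
      + dZ (dZ ψ) (Tmap v p) := by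
  have hΩo : IsOpen (OmegaV D v) := isOpen_omega hD hv2.continuousOn
  have hco : IsOpen (cyl D) := isOpen_cyl hD
  have hq : (p.1, p.2.1) ∈ D := hp.1
  have hw : Tmap v p ∈ OmegaV D v := Tmap_mem_omega hv1d hp
  set w := Tmap v p with hwdef
  set A := fderiv ℝ ψ w with hA
  set B := fderiv ℝ (fderiv ℝ ψ) w with hBd
  set a := fderiv ℝ v (p.1, p.2.1) with ha
  set b := fderiv ℝ (fderiv ℝ v) (p.1, p.2.1) with hbd
  have hB : HasFDerivAt (fderiv ℝ ψ) B w := hasFDerivAt_fderiv_of_C2 hΩo hψ hw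
  have hb : HasFDerivAt (fderiv ℝ v) b (p.1, p.2.1) := hasFDerivAt_fderiv_of_pC2 hD hv2 hq
  have hvd : HasFDerivAt v a (p.1, p.2.1) := (pdiffAt_of_C2 hD hv2 hq).hasFDerivAt
  -- x-direction curve
  have h3x : HasDerivAt (fun t => v (t, p.2.1)) (a (1, 0)) p.1 := hasDerivAt_pslice1 hvd
  have hcx : HasDerivAt (fun t => Tmap v (t, p.2.1, p.2.2)) (1, 0, a (1, 0) * p.2.2) p.1 := by
    refine (hasDerivAt_id p.1).prodMk ((hasDerivAt_const _ _).prodMk ?_)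
    simpa using ((h3x.const_add 1).mul_const p.2.2).sub_const 1
  have hAx : HasDerivAt (fun t => fderiv ℝ ψ (Tmap v (t, p.2.1, p.2.2)))
      (B (1, 0, a (1, 0) * p.2.2)) p.1 := hB.comp_hasDerivAt p.1 hcx
  have hvax : HasDerivAt (fun t => fderiv ℝ v (t, p.2.1)) (b (1, 0)) p.1 := hasDerivAt_pslice1 hb
  -- y-direction curve
  have h3y : HasDerivAt (fun t => v (p.1, t)) (a (0, 1)) p.2.1 := hasDerivAt_pslice2 hvd
  have hcy : HasDerivAt (fun t => Tmap v (p.1, t, p.2.2)) (0, 1, a (0, 1) * p.2.2) p.2.1 := by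
    refine (hasDerivAt_const _ _).prodMk ((hasDerivAt_id _).prodMk ?_)
    simpa using ((h3y.const_add 1).mul_const p.2.2).sub_const 1
  have hAy : HasDerivAt (fun t => fderiv ℝ ψ (Tmap v (p.1, t, p.2.2)))
      (B (0, 1, a (0, 1) * p.2.2)) p.2.1 := hB.comp_hasDerivAt p.2.1 hcy
  have hvay : HasDerivAt (fun t => fderiv ℝ v (p.1, t)) (b (0, 1)) p.2.1 := hasDerivAt_pslice2 hb
  -- z-direction curve
  have hcz : HasDerivAt (fun t => Tmap v (p.1, p.2.1, t)) (0, 0, 1 + v (p.1, p.2.1)) p.2.2 := by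
    refine (hasDerivAt_const _ _).prodMk ((hasDerivAt_const _ _).prodMk ?_)
    simpa using ((hasDerivAt_id p.2.2).const_mul (1 + v (p.1, p.2.1))).sub_const 1
  have hAz : HasDerivAt (fun t => fderiv ℝ ψ (Tmap v (p.1, p.2.1, t)))
      (B (0, 0, 1 + v (p.1, p.2.1))) p.2.2 := hB.comp_hasDerivAt p.2.2 hcz
  -- eventual memberships
  have hmemx : ∀ᶠ t in 𝓝 p.1, ((t, p.2.1, p.2.2) : ℝ × ℝ × ℝ) ∈ cyl D :=
    (tendsto_slice1 p).eventually (Filter.eventually_mem_set.2 (hco.mem_nhds hp))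
  have hmemy : ∀ᶠ t in 𝓝 p.2.1, ((p.1, t, p.2.2) : ℝ × ℝ × ℝ) ∈ cyl D :=
    (tendsto_slice2 p).eventually (Filter.eventually_mem_set.2 (hco.mem_nhds hp))
  have hmemz : ∀ᶠ t in 𝓝 p.2.2, ((p.1, p.2.1, t) : ℝ × ℝ × ℝ) ∈ cyl D :=
    (tendsto_slice3 p).eventually (Filter.eventually_mem_set.2 (hco.mem_nhds hp))
  -- eventual formulas for first derivatives of φ
  have hevx : ∀ᶠ t in 𝓝 p.1, dX φ (t, p.2.1, p.2.2)
      = fderiv ℝ ψ (Tmap v (t, p.2.1, p.2.2)) (1, 0, 0)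
        + (p.2.2 * fderiv ℝ v (t, p.2.1) (1, 0))
          * fderiv ℝ ψ (Tmap v (t, p.2.1, p.2.2)) (0, 0, 1) := by
    filter_upwards [hmemx] with t ht using dX_phi hD hv2 hΩo hψ hv1d hφ ht
  have hevy : ∀ᶠ t in 𝓝 p.2.1, dY φ (p.1, t, p.2.2)
      = fderiv ℝ ψ (Tmap v (p.1, t, p.2.2)) (0, 1, 0)
        + (p.2.2 * fderiv ℝ v (p.1, t) (0, 1))
          * fderiv ℝ ψ (Tmap v (p.1, t, p.2.2)) (0, 0, 1) := by
    filter_upwards [hmemy] with t ht using dY_phi hD hv2 hΩo hψ hv1d hφ ht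
  have hevzx : ∀ᶠ t in 𝓝 p.1, dZ φ (t, p.2.1, p.2.2)
      = (1 + v (t, p.2.1)) * fderiv ℝ ψ (Tmap v (t, p.2.1, p.2.2)) (0, 0, 1) := by
    filter_upwards [hmemx] with t ht using dZ_phi hΩo hψ hv1d hφ ht
  have hevzy : ∀ᶠ t in 𝓝 p.2.1, dZ φ (p.1, t, p.2.2)
      = (1 + v (p.1, t)) * fderiv ℝ ψ (Tmap v (p.1, t, p.2.2)) (0, 0, 1) := by
    filter_upwards [hmemy] with t ht using dZ_phi hΩo hψ hv1d hφ ht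
  have hevzz : ∀ᶠ t in 𝓝 p.2.2, dZ φ (p.1, p.2.1, t)
      = (1 + v (p.1, p.2.1)) * fderiv ℝ ψ (Tmap v (p.1, p.2.1, t)) (0, 0, 1) := by
    filter_upwards [hmemz] with t ht using dZ_phi hΩo hψ hv1d hφ ht
  -- second derivatives of φ
  have t1x : HasDerivAt (fun t => fderiv ℝ ψ (Tmap v (t, p.2.1, p.2.2)) (1, 0, 0))
      (B (1, 0, a (1, 0) * p.2.2) (1, 0, 0)) p.1 := by
    simpa using hAx.clm_apply (hasDerivAt_const _ _)
  have t3x : HasDerivAt (fun t => fderiv ℝ ψ (Tmap v (t, p.2.1, p.2.2)) (0, 0, 1))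
      (B (1, 0, a (1, 0) * p.2.2) (0, 0, 1)) p.1 := by
    simpa using hAx.clm_apply (hasDerivAt_const _ _)
  have t2x : HasDerivAt (fun t => p.2.2 * fderiv ℝ v (t, p.2.1) (1, 0))
      (p.2.2 * b (1, 0) (1, 0)) p.1 := by
    simpa using (hvax.clm_apply (hasDerivAt_const _ _)).const_mul p.2.2
  have hXX : dX (dX φ) p = B (1, 0, a (1, 0) * p.2.2) (1, 0, 0)
      + (p.2.2 * b (1, 0) (1, 0) * A (0, 0, 1)
        + p.2.2 * fderiv ℝ v (p.1, p.2.1) (1, 0) * B (1, 0, a (1, 0) * p.2.2) (0, 0, 1)) := by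
    show deriv (fun t => dX φ (t, p.2.1, p.2.2)) p.1 = _
    rw [Filter.EventuallyEq.deriv_eq hevx]
    exact (t1x.add (t2x.mul t3x)).deriv
  have t1y : HasDerivAt (fun t => fderiv ℝ ψ (Tmap v (p.1, t, p.2.2)) (0, 1, 0))
      (B (0, 1, a (0, 1) * p.2.2) (0, 1, 0)) p.2.1 := by
    simpa using hAy.clm_apply (hasDerivAt_const _ _)
  have t3y : HasDerivAt (fun t => fderiv ℝ ψ (Tmap v (p.1, t, p.2.2)) (0, 0, 1))
      (B (0, 1, a (0, 1) * p.2.2) (0, 0, 1)) p.2.1 := by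
    simpa using hAy.clm_apply (hasDerivAt_const _ _)
  have t2y : HasDerivAt (fun t => p.2.2 * fderiv ℝ v (p.1, t) (0, 1))
      (p.2.2 * b (0, 1) (0, 1)) p.2.1 := by
    simpa using (hvay.clm_apply (hasDerivAt_const _ _)).const_mul p.2.2
  have hYY : dY (dY φ) p = B (0, 1, a (0, 1) * p.2.2) (0, 1, 0)
      + (p.2.2 * b (0, 1) (0, 1) * A (0, 0, 1)
        + p.2.2 * fderiv ℝ v (p.1, p.2.1) (0, 1) * B (0, 1, a (0, 1) * p.2.2) (0, 0, 1)) := by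
    show deriv (fun t => dY φ (p.1, t, p.2.2)) p.2.1 = _
    rw [Filter.EventuallyEq.deriv_eq hevy]
    exact (t1y.add (t2y.mul t3y)).deriv
  have t3z : HasDerivAt (fun t => fderiv ℝ ψ (Tmap v (p.1, p.2.1, t)) (0, 0, 1))
      (B (0, 0, 1 + v (p.1, p.2.1)) (0, 0, 1)) p.2.2 := by
    simpa using hAz.clm_apply (hasDerivAt_const _ _)
  have hZZ : dZ (dZ φ) p
      = (1 + v (p.1, p.2.1)) * B (0, 0, 1 + v (p.1, p.2.1)) (0, 0, 1) := by
    show deriv (fun t => dZ φ (p.1, p.2.1, t)) p.2.2 = _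
    rw [Filter.EventuallyEq.deriv_eq hevzz]
    exact (t3z.const_mul (1 + v (p.1, p.2.1))).deriv
  have hvx1 : HasDerivAt (fun t => 1 + v (t, p.2.1)) (a (1, 0)) p.1 := by
    simpa using h3x.const_add 1
  have hXZ : dX (dZ φ) p = a (1, 0) * A (0, 0, 1)
      + (1 + v (p.1, p.2.1)) * B (1, 0, a (1, 0) * p.2.2) (0, 0, 1) := by
    show deriv (fun t => dZ φ (t, p.2.1, p.2.2)) p.1 = _
    rw [Filter.EventuallyEq.deriv_eq hevzx]
    exact (hvx1.mul t3x).deriv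
  have hvy1 : HasDerivAt (fun t => 1 + v (p.1, t)) (a (0, 1)) p.2.1 := by
    simpa using h3y.const_add 1
  have hYZ : dY (dZ φ) p = a (0, 1) * A (0, 0, 1)
      + (1 + v (p.1, p.2.1)) * B (0, 1, a (0, 1) * p.2.2) (0, 0, 1) := by
    show deriv (fun t => dZ φ (p.1, t, p.2.2)) p.2.1 = _
    rw [Filter.EventuallyEq.deriv_eq hevzy]
    exact (hvy1.mul t3y).deriv
  have hZv : dZ φ p = (1 + v (p.1, p.2.1)) * A (0, 0, 1) := dZ_phi hΩo hψ hv1d hφ hp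
  -- expansions of B on composite vectors
  have hu1 : ∀ u : ℝ × ℝ × ℝ, B (1, 0, a (1, 0) * p.2.2) u
      = B (1, 0, 0) u + (a (1, 0) * p.2.2) * B (0, 0, 1) u := by
    intro u
    rw [show ((1, 0, a (1, 0) * p.2.2) : ℝ × ℝ × ℝ)
        = (1, 0, 0) + (a (1, 0) * p.2.2) • (0, 0, 1) from by simp [Prod.ext_iff],
      map_add, _root_.map_smul]
    simp
  have hu2 : ∀ u : ℝ × ℝ × ℝ, B (0, 1, a (0, 1) * p.2.2) u
      = B (0, 1, 0) u + (a (0, 1) * p.2.2) * B (0, 0, 1) u := by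
    intro u
    rw [show ((0, 1, a (0, 1) * p.2.2) : ℝ × ℝ × ℝ)
        = (0, 1, 0) + (a (0, 1) * p.2.2) • (0, 0, 1) from by simp [Prod.ext_iff],
      map_add, _root_.map_smul]
    simp
  have hu3 : ∀ u : ℝ × ℝ × ℝ, B (0, 0, 1 + v (p.1, p.2.1)) u
      = (1 + v (p.1, p.2.1)) * B (0, 0, 1) u := by
    intro u
    rw [show ((0, 0, 1 + v (p.1, p.2.1)) : ℝ × ℝ × ℝ)
        = (1 + v (p.1, p.2.1)) • (0, 0, 1) from by simp [Prod.ext_iff], _root_.map_smul]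
    simp
  -- symmetry of second derivatives
  have hs13 : B (0, 0, 1) (1, 0, 0) = B (1, 0, 0) (0, 0, 1) := symm_snd_of_C2 hΩo hψ hw _ _
  have hs23 : B (0, 0, 1) (0, 1, 0) = B (0, 1, 0) (0, 0, 1) := symm_snd_of_C2 hΩo hψ hw _ _
  -- coefficient values
  have hd1v : d1 v (p.1, p.2.1) = a (1, 0) := d1_of_hasFDerivAt hvd
  have hd2v : d2 v (p.1, p.2.1) = a (0, 1) := d2_of_hasFDerivAt hvd
  have hl1v : d1 (d1 v) (p.1, p.2.1) = b (1, 0) (1, 0) := d1d1_of_C2 hD hv2 hq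
  have hl2v : d2 (d2 v) (p.1, p.2.1) = b (0, 1) (0, 1) := d2d2_of_C2 hD hv2 hq
  -- RHS second derivatives of ψ
  have hRX : dX (dX ψ) w = B (1, 0, 0) (1, 0, 0) := dXdX_of_C2 hΩo hψ hw
  have hRY : dY (dY ψ) w = B (0, 1, 0) (0, 1, 0) := dYdY_of_C2 hΩo hψ hw
  have hRZ : dZ (dZ ψ) w = B (0, 0, 1) (0, 0, 1) := dZdZ_of_C2 hΩo hψ hw
  have hvne : (1 + v (p.1, p.2.1)) ≠ 0 := ne_of_gt (hv1d _ hq)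
  simp only [Lop, gradSq, lap, hd1v, hd2v, hl1v, hl2v, hXX, hYY, hZZ, hXZ, hYZ, hZv,
    hRX, hRY, hRZ, hu1, hu2, hu3, hs13, hs23]
  field_simp
  ring

end key


noncomputable def Smap (v : ℝ × ℝ → ℝ) (w : ℝ × ℝ × ℝ) : ℝ × ℝ × ℝ :=
  (w.1, w.2.1, (w.2.2 + 1) / (1 + v (w.1, w.2.1)))

section front
variable {D : Set (ℝ × ℝ)} {v : ℝ × ℝ → ℝ}

lemma Tmap_frontier (hD : IsOpen D) (hv2 : ContDiffOn ℝ 2 v D)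
    (hvc : ContinuousOn v (closure D)) (hv1 : ∀ q ∈ closure D, -1 < v q)
    {p : ℝ × ℝ × ℝ} (hp : p ∈ frontier (cyl D)) :
    Tmap v p ∈ frontier (OmegaV D v)
      ∧ (p.1, p.2.1) ∈ closure D := by
  rw [(isOpen_cyl hD).frontier_eq, closure_cyl hD] at hp
  obtain ⟨⟨hq, hη0, hη1⟩, hnot⟩ := hp
  have hvq : 0 < 1 + v (p.1, p.2.1) := by linarith [hv1 _ hq]
  rw [(isOpen_omega hD hv2.continuousOn).frontier_eq, closure_omega hD hvc hv1]
  refine ⟨⟨⟨hq, by simp only [Tmap]; constructor <;> nlinarith⟩, ?_⟩, hq⟩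
  rintro ⟨hqD, h1, h2⟩
  simp only [Tmap] at h1 h2
  refine hnot ⟨hqD, ?_, ?_⟩
  · by_contra h; push_neg at h; nlinarith
  · by_contra h; push_neg at h; nlinarith

lemma Smap_omega (hv1 : ∀ q ∈ closure D, -1 < v q)
    {w : ℝ × ℝ × ℝ} (hw : w ∈ OmegaV D v) :
    Smap v w ∈ cyl D ∧ Tmap v (Smap v w) = w := by
  obtain ⟨hq, h1, h2⟩ := hw
  have hvq : 0 < 1 + v (w.1, w.2.1) := by linarith [hv1 _ (subset_closure hq)]
  constructor
  · refine ⟨hq, div_pos (by linarith) hvq, ?_⟩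
    show (w.2.2 + 1) / (1 + v (w.1, w.2.1)) < 1
    rw [div_lt_one hvq]; linarith
  · simp only [Tmap, Smap]
    refine Prod.ext rfl (Prod.ext rfl ?_)
    field_simp; ring

lemma Smap_frontier (hD : IsOpen D) (hv2 : ContDiffOn ℝ 2 v D)
    (hvc : ContinuousOn v (closure D)) (hv1 : ∀ q ∈ closure D, -1 < v q)
    {w : ℝ × ℝ × ℝ} (hw : w ∈ frontier (OmegaV D v)) :
    Smap v w ∈ frontier (cyl D) ∧ Tmap v (Smap v w) = w
      ∧ (w.1, w.2.1) ∈ closure D := by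
  rw [(isOpen_omega hD hv2.continuousOn).frontier_eq, closure_omega hD hvc hv1] at hw
  obtain ⟨⟨hq, hz1, hz2⟩, hnot⟩ := hw
  have hvq : 0 < 1 + v (w.1, w.2.1) := by linarith [hv1 _ hq]
  rw [(isOpen_cyl hD).frontier_eq, closure_cyl hD]
  refine ⟨⟨⟨hq, ?_, ?_⟩, ?_⟩, ?_, hq⟩
  · exact div_nonneg (by linarith) (by linarith)
  · show (w.2.2 + 1) / (1 + v (w.1, w.2.1)) ≤ 1
    rw [div_le_one hvq]; linarith
  · rintro ⟨hqD, h0, h1⟩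
    simp only [Smap] at h0 h1
    refine hnot ⟨hqD, ?_, ?_⟩
    · have := (div_pos_iff.1 h0)
      rcases this with ⟨ha, _⟩ | ⟨_, hb⟩
      · linarith
      · linarith
    · have := (div_lt_one hvq).1 h1
      linarith
  · simp only [Tmap, Smap]
    refine Prod.ext rfl (Prod.ext rfl ?_)
    field_simp; ring

end front

/-- Equivalence of the boundary value problem for the electrostatic
potential `ψ` on the varying region `Ω(v)` with the transformed problem for
`φ(x,y,η) = ψ(x,y,(1+v(x,y))η-1)` on the fixed cylinder `Ω = D × (0,1)`. -/
theorem stmt2 (D : Set (ℝ × ℝ)) (hD : IsOpen D) (hDb : Bornology.IsBounded D)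
    (ε : ℝ) (hε : 0 < ε)
    (v : ℝ × ℝ → ℝ) (hv2 : ContDiffOn ℝ 2 v D) (hvc : ContinuousOn v (closure D))
    (hv1 : ∀ q ∈ closure D, -1 < v q)
    (ψ : ℝ × ℝ × ℝ → ℝ) (hψ : ContDiffOn ℝ 2 ψ (OmegaV D v))
    (hψc : ContinuousOn ψ (closure (OmegaV D v)))
    (φ : ℝ × ℝ × ℝ → ℝ)
    (hφ : ∀ z : ℝ × ℝ × ℝ, φ z = ψ (z.1, z.2.1, (1 + v (z.1, z.2.1)) * z.2.2 - 1)) :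
    ((∀ z ∈ OmegaV D v,
        ε ^ 2 * dX (dX ψ) z + ε ^ 2 * dY (dY ψ) z + dZ (dZ ψ) z = 0) ∧
      (∀ z ∈ frontier (OmegaV D v), ψ z = (1 + z.2.2) / (1 + v (z.1, z.2.1))))
    ↔
    ((∀ z ∈ cyl D, Lop ε v φ z = 0) ∧
      (∀ z ∈ frontier (cyl D), φ z = z.2.2)) := by
  have hv1d : ∀ q ∈ D, 0 < 1 + v q := fun q hq => by linarith [hv1 q (subset_closure hq)]
  constructor
  · rintro ⟨hPDE, hBC⟩
    refine ⟨fun p hp => ?_, fun p hp => ?_⟩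
    · rw [key_identity hD hv2 hv1d hψ hφ hp]
      exact hPDE _ (Tmap_mem_omega hv1d hp)
    · obtain ⟨hfr, hqc⟩ := Tmap_frontier hD hv2 hvc hv1 hp
      have h := hBC _ hfr
      have hvne : (1 + v (p.1, p.2.1)) ≠ 0 := ne_of_gt (by linarith [hv1 _ hqc])
      rw [hφ p]
      have he : ψ (p.1, p.2.1, (1 + v (p.1, p.2.1)) * p.2.2 - 1) = ψ (Tmap v p) := rfl
      rw [he, h]
      simp only [Tmap]
      field_simp; ring
  · rintro ⟨hL, hBC⟩
    refine ⟨fun w hw => ?_, fun w hw => ?_⟩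
    · obtain ⟨hs, hTS⟩ := Smap_omega hv1 hw
      have h := hL _ hs
      rw [key_identity hD hv2 hv1d hψ hφ hs, hTS] at h
      exact h
    · obtain ⟨hmem, hTS, hqc⟩ := Smap_frontier hD hv2 hvc hv1 hw
      have h := hBC _ hmem
      rw [hφ] at h
      have he : ψ ((Smap v w).1, (Smap v w).2.1,
          (1 + v ((Smap v w).1, (Smap v w).2.1)) * (Smap v w).2.2 - 1)
          = ψ (Tmap v (Smap v w)) := rfl
      rw [he, hTS] at h
      rw [h]
      simp only [Smap]
      ring
end

section
/- Let $\varepsilon>0$, $\kappa\in(0,1)$, $c_0>0$, and let $V,p_1,p_2,\eta\in\mathbb{R}$ satisfy $\kappa\le V\le 1+c_0/\kappa$, $p_1^2+p_2^2\le c_0^2/\kappa^2$ and $0\le\eta\le1$. Consider the real symmetric $3\times3$ matrix $\mathcal{P}$ with entries $\mathcal{P}_{11}=\mathcal{P}_{22}=\varepsilon^2$, $\mathcal{P}_{12}=\mathcal{P}_{21}=0$, $\mathcal{P}_{13}=\mathcal{P}_{31}=-\varepsilon^2\eta p_1/V$, $\mathcal{P}_{23}=\mathcal{P}_{32}=-\varepsilon^2\eta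 p_2/V$, $\mathcal{P}_{33}=\big(1+\varepsilon^2\eta^2(p_1^2+p_2^2)\big)/V^2$. Then $\mathcal{P}$ is positive definite and for every $\xi\in\mathbb{R}^3$ one has $\xi^\top\mathcal{P}\,\xi\ \ge\ \nu\,|\xi|^2$ with the explicit constant $\nu:=\dfrac{\varepsilon^2\kappa^2}{\kappa^2(1+2\varepsilon^2)+3\varepsilon^2 c_0^2}>0$. -/
open Matrix

lemma keyB (e V A B a b c : ℝ) (hV : 0 < V) :
    e ^ 2 / (1 + e ^ 2 * (V ^ 2 + A ^ 2 + B ^ 2)) * (a ^ 2 + b ^ 2 + c ^ 2)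
      ≤ e ^ 2 * a ^ 2 + e ^ 2 * b ^ 2 - 2 * (e ^ 2 * A / V) * (a * c)
        - 2 * (e ^ 2 * B / V) * (b * c)
        + (1 + e ^ 2 * (A ^ 2 + B ^ 2)) / V ^ 2 * c ^ 2 := by
  have hD : (0:ℝ) < 1 + e ^ 2 * (V ^ 2 + A ^ 2 + B ^ 2) := by positivity
  rw [div_mul_eq_mul_div, div_le_iff₀ hD]
  have hRHS : e ^ 2 * a ^ 2 + e ^ 2 * b ^ 2 - 2 * (e ^ 2 * A / V) * (a * c)
        - 2 * (e ^ 2 * B / V) * (b * c)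
        + (1 + e ^ 2 * (A ^ 2 + B ^ 2)) / V ^ 2 * c ^ 2
      = (e ^ 2 * (V * a - A * c) ^ 2 + e ^ 2 * (V * b - B * c) ^ 2 + c ^ 2) / V ^ 2 := by
    field_simp
    ring
  rw [hRHS, div_mul_eq_mul_div, le_div_iff₀ (by positivity : (0:ℝ) < V ^ 2)]
  set X := V * a - A * c with hX
  set Y := V * b - B * c with hY
  have hid : e ^ 2 * (a ^ 2 + b ^ 2 + c ^ 2) * V ^ 2
      + ((c - e ^ 2 * (A * X + B * Y)) ^ 2 + (e ^ 2 * (A * Y - B * X)) ^ 2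
        + (e ^ 2 * V * X) ^ 2 + (e ^ 2 * V * Y) ^ 2)
      = (e ^ 2 * X ^ 2 + e ^ 2 * Y ^ 2 + c ^ 2) * (1 + e ^ 2 * (V ^ 2 + A ^ 2 + B ^ 2)) := by
    rw [hX, hY]; ring
  nlinarith [sq_nonneg (c - e ^ 2 * (A * X + B * Y)), sq_nonneg (e ^ 2 * (A * Y - B * X)),
    sq_nonneg (e ^ 2 * V * X), sq_nonneg (e ^ 2 * V * Y)]

set_option maxHeartbeats 1000000 in
/-- Under the bounds `κ ≤ V ≤ 1 + c₀/κ`, `p₁² + p₂² ≤ c₀²/κ²`,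
`0 ≤ η ≤ 1`, the coefficient matrix `𝒫` is positive definite and satisfies the uniform
ellipticity estimate `ξᵀ𝒫ξ ≥ ν|ξ|²` with the explicit constant
`ν = ε²κ²/(κ²(1+2ε²) + 3ε²c₀²) > 0`. -/
theorem stmt5 (ε κ c0 V p1 p2 η : ℝ) (hε : 0 < ε) (hκ : κ ∈ Set.Ioo (0 : ℝ) 1)
    (hc0 : 0 < c0) (hV1 : κ ≤ V) (hV2 : V ≤ 1 + c0 / κ)
    (hp : p1 ^ 2 + p2 ^ 2 ≤ c0 ^ 2 / κ ^ 2) (hη1 : 0 ≤ η) (hη2 : η ≤ 1)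
    (P : Matrix (Fin 3) (Fin 3) ℝ)
    (hP : P = !![ε ^ 2, 0, -(ε ^ 2) * η * p1 / V;
                 0, ε ^ 2, -(ε ^ 2) * η * p2 / V;
                 -(ε ^ 2) * η * p1 / V, -(ε ^ 2) * η * p2 / V,
                   (1 + ε ^ 2 * η ^ 2 * (p1 ^ 2 + p2 ^ 2)) / V ^ 2])
    (ν : ℝ) (hν : ν = ε ^ 2 * κ ^ 2 / (κ ^ 2 * (1 + 2 * ε ^ 2) + 3 * ε ^ 2 * c0 ^ 2)) :
    P.PosDef ∧ 0 < ν ∧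
      ∀ ξ : Fin 3 → ℝ, ν * (ξ 0 ^ 2 + ξ 1 ^ 2 + ξ 2 ^ 2) ≤ ξ ⬝ᵥ P.mulVec ξ := by
  obtain ⟨hκ0, hκ1⟩ := hκ
  have hV0 : 0 < V := lt_of_lt_of_le hκ0 hV1
  have hDen : (0:ℝ) < κ ^ 2 * (1 + 2 * ε ^ 2) + 3 * ε ^ 2 * c0 ^ 2 := by positivity
  have hν0 : 0 < ν := by rw [hν]; positivity
  set A := η * p1 with hA
  set B := η * p2 with hB
  -- bound : κ²(1 + ε²(V²+A²+B²)) ≤ denominator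
  have hAB : A ^ 2 + B ^ 2 ≤ c0 ^ 2 / κ ^ 2 := by
    have hη2' : η ^ 2 ≤ 1 := by nlinarith
    have hps : 0 ≤ p1 ^ 2 + p2 ^ 2 := by positivity
    calc A ^ 2 + B ^ 2 = η ^ 2 * (p1 ^ 2 + p2 ^ 2) := by rw [hA, hB]; ring
      _ ≤ 1 * (p1 ^ 2 + p2 ^ 2) := by nlinarith
      _ ≤ c0 ^ 2 / κ ^ 2 := by linarith
  have hABκ : κ ^ 2 * (A ^ 2 + B ^ 2) ≤ c0 ^ 2 := by
    have := mul_le_mul_of_nonneg_left hAB (by positivity : (0:ℝ) ≤ κ ^ 2)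
    calc κ ^ 2 * (A ^ 2 + B ^ 2) ≤ κ ^ 2 * (c0 ^ 2 / κ ^ 2) := this
      _ = c0 ^ 2 := by field_simp
  have hVκ : κ * V ≤ κ + c0 := by
    have := mul_le_mul_of_nonneg_left hV2 (le_of_lt hκ0)
    calc κ * V ≤ κ * (1 + c0 / κ) := this
      _ = κ + c0 := by field_simp
  have hV2κ : κ ^ 2 * V ^ 2 ≤ (κ + c0) ^ 2 := by nlinarith [mul_pos hκ0 hV0]
  have hbound : κ ^ 2 * (1 + ε ^ 2 * (V ^ 2 + A ^ 2 + B ^ 2))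
      ≤ κ ^ 2 * (1 + 2 * ε ^ 2) + 3 * ε ^ 2 * c0 ^ 2 := by
    nlinarith [sq_nonneg (κ - c0), sq_nonneg ε]
  have hD2 : (0:ℝ) < 1 + ε ^ 2 * (V ^ 2 + A ^ 2 + B ^ 2) := by positivity
  have hνle : ν ≤ ε ^ 2 / (1 + ε ^ 2 * (V ^ 2 + A ^ 2 + B ^ 2)) := by
    rw [hν]
    rw [div_le_div_iff₀ hDen hD2]
    have h := mul_le_mul_of_nonneg_left hbound (by positivity : (0:ℝ) ≤ ε ^ 2)
    linarith [h]
  have key : ∀ ξ : Fin 3 → ℝ,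
      ν * (ξ 0 ^ 2 + ξ 1 ^ 2 + ξ 2 ^ 2) ≤ ξ ⬝ᵥ P.mulVec ξ := by
    intro ξ
    have hQ : ξ ⬝ᵥ P.mulVec ξ
        = ε ^ 2 * ξ 0 ^ 2 + ε ^ 2 * ξ 1 ^ 2 - 2 * (ε ^ 2 * A / V) * (ξ 0 * ξ 2)
          - 2 * (ε ^ 2 * B / V) * (ξ 1 * ξ 2)
          + (1 + ε ^ 2 * (A ^ 2 + B ^ 2)) / V ^ 2 * ξ 2 ^ 2 := by
      subst hP
      simp [dotProduct, Matrix.mulVec, Fin.sum_univ_three, hA, hB]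
      field_simp
      ring
    rw [hQ]
    have h1 := keyB ε V A B (ξ 0) (ξ 1) (ξ 2) hV0
    have h2 : ν * (ξ 0 ^ 2 + ξ 1 ^ 2 + ξ 2 ^ 2)
        ≤ ε ^ 2 / (1 + ε ^ 2 * (V ^ 2 + A ^ 2 + B ^ 2)) * (ξ 0 ^ 2 + ξ 1 ^ 2 + ξ 2 ^ 2) := by
      apply mul_le_mul_of_nonneg_right hνle (by positivity)
    linarith
  refine ⟨Matrix.PosDef.of_dotProduct_mulVec_pos ?_ ?_, hν0, key⟩
  · ext i j
    fin_cases i <;> fin_cases j <;> simp [hP, Matrix.conjTranspose_apply]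
  · intro x hx
    have hx2 : 0 < x 0 ^ 2 + x 1 ^ 2 + x 2 ^ 2 := by
      rcases Function.ne_iff.mp hx with ⟨i, hi⟩
      fin_cases i <;>
        · simp only [Pi.zero_apply] at hi
          have := pow_pos (abs_pos.mpr hi) 2
          positivity
    have := key x
    simp only [star_trivial]
    calc (0:ℝ) < ν * (x 0 ^ 2 + x 1 ^ 2 + x 2 ^ 2) := by positivity
      _ ≤ x ⬝ᵥ P.mulVec x := this
end
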